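/- arXiv:2001.07955 — 6 statements merged into one kernel-verified Lean document; each statement's English description precedes it below -/
import Mathlib

section
/- Let G be a simple graph whose vertex set is V₁ ∪ V₂ with V₁ ∩ V₂ = {v₀} and such that every edge of G lies entirely within G[V₁] or G[V₂]. If f₁ ∈ SEDF⁰(G[V₁]) and f₂ ∈ SEDF⁰(G[V₂]), then the function f defined by f(e) = fᵢ(e) for e ∈ E(G[Vᵢ]) belongs to SEDF⁰(G), and f(G) = f₁(G[V₁]) + f₂(G[V₂]). -/
open Finset

open scoped Classical

/-- The weight of a vertex `v`: the sum of `f` over the edges of `G` incident to `v`. -/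
noncomputable def vweight {V : Type*} [Fintype V] [DecidableEq V]
    (G : SimpleGraph V) (f : Sym2 V → ℤ) (v : V) : ℤ :=
  ∑ e ∈ G.incidenceFinset v, f e

/-- `f` is a signed edge domination function of `G`: it takes values in `{1,-1}` on the
edges and for each edge `e = uv`, `∑_{e' ∈ N[e]} f e' = f(u) + f(v) - f(e) ≥ 1`. -/
noncomputable def IsSEDF {V : Type*} [Fintype V] [DecidableEq V]
    (G : SimpleGraph V) (f : Sym2 V → ℤ) : Prop :=
  (∀ e ∈ G.edgeFinset, f e = 1 ∨ f e = -1) ∧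
  ∀ ⦃u v⦄, G.Adj u v → 1 ≤ vweight G f u + vweight G f v - f s(u, v)

/-- `f ∈ SEDF⁰(G)`: `f` takes values in `{1,-1}` on the edges, every vertex has
nonnegative weight, and both endpoints of any positive edge have weights summing to ≥ 2. -/
noncomputable def IsSEDF0 {V : Type*} [Fintype V] [DecidableEq V]
    (G : SimpleGraph V) (f : Sym2 V → ℤ) : Prop :=
  (∀ e ∈ G.edgeFinset, f e = 1 ∨ f e = -1) ∧
  (∀ v, 0 ≤ vweight G f v) ∧
  ∀ ⦃u v⦄, G.Adj u v → f s(u, v) = 1 → 2 ≤ vweight G f u + vweight G f v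

/-!
A vertex's weight in `G` is the sum of its weights in the two sides: the incident edges of a
vertex split between `G[V₁]` and `G[V₂]`, and no edge lies in both because the sides share only
the vertex `v₀`. The SEDF⁰ conditions are then inherited: nonnegativity adds up, and a positive
edge lies in one side, where its endpoints already have weight sum at least `2`, while the other
side contributes nonnegatively. The total weight splits in the same way.
-/

namespace SimpleGraph

variable {V : Type*} [DecidableEq V] {G H : SimpleGraph V} {f g : Sym2 V → ℤ}

theorem incidenceFinset_sup (v : V) [Fintype ((G ⊔ H).neighborSet v)]
    [Fintype (G.neighborSet v)] [Fintype (H.neighborSet v)] :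
    (G ⊔ H).incidenceFinset v = G.incidenceFinset v ∪ H.incidenceFinset v := by
  ext e
  simp only [mem_union, mem_incidenceFinset, incidenceSet, edgeSet_sup]
  grind

theorem disjoint_of_adj_mem_of_inter_subset_singleton {s t : Finset V} {x : V}
    (hst : s ∩ t ⊆ {x}) (hG : ∀ u v, G.Adj u v → u ∈ s ∧ v ∈ s)
    (hH : ∀ u v, H.Adj u v → u ∈ t ∧ v ∈ t) : Disjoint G H := by
  rw [← disjoint_edgeSet, Set.disjoint_left, Sym2.forall]
  intro u v hGuv hHuv
  have hu := hst (mem_inter.2 ⟨(hG u v hGuv).1, (hH u v hHuv).1⟩)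
  have hv := hst (mem_inter.2 ⟨(hG u v hGuv).2, (hH u v hHuv).2⟩)
  rw [mem_singleton] at hu hv
  exact hGuv.ne (hu.trans hv.symm)

variable [Fintype V]

theorem vweight_congr (hfg : ∀ e ∈ G.edgeFinset, f e = g e) (v : V) :
    vweight G f v = vweight G g v :=
  sum_congr rfl fun e he => hfg e (G.incidenceFinset_subset v he)

theorem vweight_sup (hGH : Disjoint G H) (v : V) :
    vweight (G ⊔ H) f v = vweight G f v + vweight H f v := by
  rw [vweight, incidenceFinset_sup, sum_union (disjoint_incidenceFinset_of_disjoint _ _ v hGH)]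
  rfl

theorem IsSEDF0.congr (hg : IsSEDF0 G g) (hfg : ∀ e ∈ G.edgeFinset, f e = g e) :
    IsSEDF0 G f := by
  obtain ⟨hsign, hnonneg, hpos⟩ := hg
  simp only [IsSEDF0, vweight_congr hfg]
  refine ⟨fun e he => hfg e he ▸ hsign e he, hnonneg, fun u v huv hf => hpos huv ?_⟩
  rwa [← hfg _ (mem_edgeFinset.2 huv)]

theorem IsSEDF0.sup (hG : IsSEDF0 G f) (hH : IsSEDF0 H f) (hGH : Disjoint G H) :
    IsSEDF0 (G ⊔ H) f := by
  obtain ⟨hGsign, hGnonneg, hGpos⟩ := hG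
  obtain ⟨hHsign, hHnonneg, hHpos⟩ := hH
  simp only [IsSEDF0, vweight_sup hGH, edgeFinset_sup, mem_union, sup_adj]
  refine ⟨fun e he => he.elim (hGsign e) (hHsign e),
    fun v => add_nonneg (hGnonneg v) (hHnonneg v), ?_⟩
  rintro u v (huv | huv) hf
  · linarith [hGpos huv hf, hHnonneg u, hHnonneg v]
  · linarith [hHpos huv hf, hGnonneg u, hGnonneg v]

end SimpleGraph

open SimpleGraph

theorem stmt1_general {V : Type*} [Fintype V] [DecidableEq V]
    (G H₁ H₂ : SimpleGraph V) (s₁ s₂ : Finset V) (v₀ : V)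
    (hint : s₁ ∩ s₂ = {v₀})
    (hH₁ : ∀ u v, H₁.Adj u v ↔ G.Adj u v ∧ u ∈ s₁ ∧ v ∈ s₁)
    (hH₂ : ∀ u v, H₂.Adj u v ↔ G.Adj u v ∧ u ∈ s₂ ∧ v ∈ s₂)
    (hpart : ∀ u v, G.Adj u v → (u ∈ s₁ ∧ v ∈ s₁) ∨ (u ∈ s₂ ∧ v ∈ s₂))
    (f₁ f₂ f : Sym2 V → ℤ)
    (h₁ : IsSEDF0 H₁ f₁) (h₂ : IsSEDF0 H₂ f₂)
    (hf₁ : ∀ e ∈ H₁.edgeFinset, f e = f₁ e) (hf₂ : ∀ e ∈ H₂.edgeFinset, f e = f₂ e) :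
    IsSEDF0 G f ∧
      ∑ e ∈ G.edgeFinset, f e =
        (∑ e ∈ H₁.edgeFinset, f₁ e) + ∑ e ∈ H₂.edgeFinset, f₂ e := by
  have hG : G = H₁ ⊔ H₂ := by
    ext u v
    rw [sup_adj, hH₁, hH₂]
    refine ⟨fun huv => (hpart u v huv).imp (⟨huv, ·⟩) (⟨huv, ·⟩), ?_⟩
    rintro (⟨huv, -⟩ | ⟨huv, -⟩) <;> exact huv
  have hdisj : Disjoint H₁ H₂ := disjoint_of_adj_mem_of_inter_subset_singleton hint.le
    (fun u v huv => ((hH₁ u v).1 huv).2) (fun u v huv => ((hH₂ u v).1 huv).2)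
  subst hG
  refine ⟨(h₁.congr hf₁).sup (h₂.congr hf₂) hdisj, ?_⟩
  rw [← sum_congr rfl hf₁, ← sum_congr rfl hf₂]
  simp only [edgeFinset_sup, sum_union (disjoint_edgeFinset.2 hdisj)]

/-- gluing SEDF⁰ functions of the two sides of a separable graph at a
cut vertex `v₀` yields an SEDF⁰ function of `G`, with total weight the sum of the two. -/
theorem stmt1 {V : Type*} [Fintype V] [DecidableEq V]
    (G H₁ H₂ : SimpleGraph V) (s₁ s₂ : Finset V) (v₀ : V)
    (hcover : s₁ ∪ s₂ = Finset.univ) (hint : s₁ ∩ s₂ = {v₀})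
    (hH₁ : ∀ u v, H₁.Adj u v ↔ G.Adj u v ∧ u ∈ s₁ ∧ v ∈ s₁)
    (hH₂ : ∀ u v, H₂.Adj u v ↔ G.Adj u v ∧ u ∈ s₂ ∧ v ∈ s₂)
    (hpart : ∀ u v, G.Adj u v → (u ∈ s₁ ∧ v ∈ s₁) ∨ (u ∈ s₂ ∧ v ∈ s₂))
    (f₁ f₂ f : Sym2 V → ℤ)
    (h₁ : IsSEDF0 H₁ f₁) (h₂ : IsSEDF0 H₂ f₂)
    (hf₁ : ∀ e ∈ H₁.edgeFinset, f e = f₁ e) (hf₂ : ∀ e ∈ H₂.edgeFinset, f e = f₂ e) :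
    IsSEDF0 G f ∧
      ∑ e ∈ G.edgeFinset, f e =
        (∑ e ∈ H₁.edgeFinset, f₁ e) + ∑ e ∈ H₂.edgeFinset, f₂ e :=
  stmt1_general G H₁ H₂ s₁ s₂ v₀ hint hH₁ hH₂ hpart f₁ f₂ f h₁ h₂ hf₁ hf₂
end

section
/- Let G be a simple graph with a vertex v₀ of degree 2 whose neighbours u₁, u₂ are adjacent in G. Let G' = G - u₁u₂ - v₀ (delete the edge u₁u₂ and the vertex v₀). If g ∈ SEDF⁰(G'), then the function f on E(G) defined by f(e) = g(e) for e ∈ E(G'), f(v₀u₁) = f(v₀u₂) = 1, and f(u₁u₂) = -1, belongs to SEDF⁰(G) and satisfies f(G) = g(G') + 1. -/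
/-!
The edges of `G` are those of `G'` together with the triangle `v₀u₁, v₀u₂, u₁u₂`, so the weight
of `f` at a vertex is the weight of `g` there plus the triangle's contribution: `1 + 1 = 2` at
`v₀`, `1 - 1 = 0` at `u₁` and `u₂`, and `0` elsewhere. Hence no weight decreases, the positive
edges of `G'` keep their condition, and the two new positive edges contain `v₀`, whose weight
is at least `2`.
-/

open Finset

open scoped Classical

section

variable {α V : Type*} [DecidableEq α] [DecidableEq V]

theorem Finset.sum_eq_sum_add_sum_of_eq_sdiff {M : Type*} [AddCommMonoid M] {s s' T : Finset α}
    {f g : α → M}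
    (hT : T ⊆ s) (hs' : s' = s \ T) (hfg : ∀ e ∈ s', f e = g e) :
    ∑ e ∈ s, f e = ∑ e ∈ s', g e + ∑ e ∈ T, f e := by
  rw [← sum_sdiff hT, ← hs', sum_congr rfl hfg]

theorem sum_filter_mem_triangle {v₀ u₁ u₂ : V} (hu : u₁ ≠ u₂) (h₁ : v₀ ≠ u₁) (h₂ : v₀ ≠ u₂)
    {f : Sym2 V → ℤ} (hf1 : f s(v₀, u₁) = 1) (hf2 : f s(v₀, u₂) = 1) (hf3 : f s(u₁, u₂) = -1)
    (v : V) :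
    ∑ e ∈ {s(v₀, u₁), s(v₀, u₂), s(u₁, u₂)} with v ∈ e, f e = if v = v₀ then 2 else 0 := by
  rw [sum_filter, sum_insert (by simp [hu, h₁, h₂]), sum_insert (by simp [h₁, h₂]),
    sum_singleton]
  simp only [Sym2.mem_iff, hf1, hf2, hf3]
  by_cases h0 : v = v₀ <;> by_cases h1 : v = u₁ <;> by_cases h2 : v = u₂ <;> simp_all

variable [Fintype V] {G G' : SimpleGraph V}

theorem edgeFinset_eq_sdiff_triangle {v₀ u₁ u₂ : V}
    (hnb : ∀ w, G.Adj v₀ w ↔ w = u₁ ∨ w = u₂)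
    (hG' : ∀ a b, G'.Adj a b ↔ G.Adj a b ∧ s(a, b) ≠ s(u₁, u₂) ∧ a ≠ v₀ ∧ b ≠ v₀) :
    G'.edgeFinset = G.edgeFinset \ {s(v₀, u₁), s(v₀, u₂), s(u₁, u₂)} := by
  ext e
  induction e using Sym2.ind with
  | _ a b =>
    simp only [mem_sdiff, SimpleGraph.mem_edgeFinset, SimpleGraph.mem_edgeSet, hG',
      mem_insert, mem_singleton, Sym2.eq_iff]
    have ha := hnb b
    have hb := hnb a
    rw [G.adj_comm] at hb
    grind

variable {T : Finset (Sym2 V)} {f g : Sym2 V → ℤ}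

theorem vweight_eq_add_of_edgeFinset_eq_sdiff (hT : T ⊆ G.edgeFinset)
    (hG' : G'.edgeFinset = G.edgeFinset \ T) (hfg : ∀ e ∈ G'.edgeFinset, f e = g e) (v : V) :
    vweight G f v = vweight G' g v + ∑ e ∈ T with v ∈ e, f e := by
  simp only [vweight, SimpleGraph.incidenceFinset_eq_filter, sum_filter]
  exact sum_eq_sum_add_sum_of_eq_sdiff hT hG' fun e he => by rw [hfg e he]

theorem isSEDF0_of_edgeFinset_eq_sdiff (hT : T ⊆ G.edgeFinset)
    (hG' : G'.edgeFinset = G.edgeFinset \ T) (hfg : ∀ e ∈ G'.edgeFinset, f e = g e)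
    (hg : IsSEDF0 G' g) (hT_val : ∀ e ∈ T, f e = 1 ∨ f e = -1)
    (hT_nonneg : ∀ v, 0 ≤ ∑ e ∈ T with v ∈ e, f e)
    (hT_pos : ∀ ⦃a b⦄, s(a, b) ∈ T → f s(a, b) = 1 → 2 ≤ vweight G f a + vweight G f b) :
    IsSEDF0 G f := by
  obtain ⟨hg_val, hg_nonneg, hg_pos⟩ := hg
  have hw := vweight_eq_add_of_edgeFinset_eq_sdiff hT hG' hfg
  have hmem : ∀ e ∈ G.edgeFinset, e ∉ T → e ∈ G'.edgeFinset := fun e he heT => by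
    rw [hG']; exact mem_sdiff.2 ⟨he, heT⟩
  refine ⟨fun e he => ?_, fun v => ?_, fun a b hab hfab => ?_⟩
  · by_cases heT : e ∈ T
    · exact hT_val e heT
    · rw [hfg e (hmem e he heT)]; exact hg_val e (hmem e he heT)
  · rw [hw]; linarith [hg_nonneg v, hT_nonneg v]
  · by_cases heT : s(a, b) ∈ T
    · exact hT_pos heT hfab
    · have he' := hmem _ (G.mem_edgeFinset.2 hab) heT
      have := hg_pos (G'.mem_edgeFinset.1 he') (hfg _ he' ▸ hfab)
      rw [hw a, hw b]; linarith [hT_nonneg a, hT_nonneg b]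

end

/-- `v₀` has degree 2 with adjacent neighbours `u₁ u₂`;
extending `g ∈ SEDF⁰(G - u₁u₂ - v₀)` by `+1, +1, -1` gives `f ∈ SEDF⁰(G)`
with `f(G) = g(G') + 1`. -/
theorem stmt2 {V : Type*} [Fintype V] [DecidableEq V]
    (G G' : SimpleGraph V) (v₀ u₁ u₂ : V) (hu : u₁ ≠ u₂)
    (hnbr : G.neighborFinset v₀ = {u₁, u₂})
    (hadj : G.Adj u₁ u₂)
    (hG' : ∀ a b, G'.Adj a b ↔ G.Adj a b ∧ s(a, b) ≠ s(u₁, u₂) ∧ a ≠ v₀ ∧ b ≠ v₀)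
    (g f : Sym2 V → ℤ) (hg : IsSEDF0 G' g)
    (hf0 : ∀ e ∈ G'.edgeFinset, f e = g e)
    (hf1 : f s(v₀, u₁) = 1) (hf2 : f s(v₀, u₂) = 1) (hf3 : f s(u₁, u₂) = -1) :
    IsSEDF0 G f ∧
      ∑ e ∈ G.edgeFinset, f e = (∑ e ∈ G'.edgeFinset, g e) + 1 := by
  have hnb : ∀ w, G.Adj v₀ w ↔ w = u₁ ∨ w = u₂ := by
    simp [← SimpleGraph.mem_neighborFinset, hnbr]
  have hv₁ : G.Adj v₀ u₁ := (hnb u₁).2 (Or.inl rfl)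
  have hv₂ : G.Adj v₀ u₂ := (hnb u₂).2 (Or.inr rfl)
  set T : Finset (Sym2 V) := {s(v₀, u₁), s(v₀, u₂), s(u₁, u₂)} with hT_def
  have hT : T ⊆ G.edgeFinset := by simp [T, insert_subset_iff, hv₁, hv₂, hadj]
  have hG'T : G'.edgeFinset = G.edgeFinset \ T := edgeFinset_eq_sdiff_triangle hnb hG'
  have hTsum := sum_filter_mem_triangle hu hv₁.ne hv₂.ne hf1 hf2 hf3
  have hw v := vweight_eq_add_of_edgeFinset_eq_sdiff hT hG'T hf0 v
  refine ⟨isSEDF0_of_edgeFinset_eq_sdiff hT hG'T hf0 hg ?_ ?_ ?_, ?_⟩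
  · simp [T, hf1, hf2, hf3]
  · intro v; rw [hTsum]; positivity
  · intro a b hab hfab
    have hv₀ : a = v₀ ∨ b = v₀ := by
      simp only [T, mem_insert, mem_singleton, Sym2.eq_iff] at hab
      grind
    rw [hw a, hw b, hTsum, hTsum]
    grind [hg.2.1 a, hg.2.1 b]
  · have hT_total : ∑ e ∈ T, f e = 1 := by
      rw [hT_def, sum_insert (by simp [hu, hv₁.ne, hv₂.ne]), sum_insert (by simp [hv₁.ne, hv₂.ne]),
        sum_singleton, hf1, hf2, hf3]
      norm_num
    rw [sum_eq_sum_add_sum_of_eq_sdiff hT hG'T hf0, hT_total]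
end

section
/- Let G be a simple graph with a vertex v₀ of degree 2 whose neighbours u₁, u₂ are not adjacent in G. Let G' = G + u₁u₂ - v₀ (add the edge u₁u₂ and delete v₀). If g ∈ SEDF⁰(G'), then the function f on E(G) defined by f(e) = g(e) for e ∈ E(G') \ {u₁u₂}, f(u₁v₀) = 1, and f(u₂v₀) = g(u₁u₂), belongs to SEDF⁰(G) and satisfies f(G) = g(G') + 1. -/
/-!
Suppressing `v₀` merges the path `u₁ v₀ u₂` into the edge `u₁u₂`. Under `f`, the vertex `u₂` keeps
its `g`-weight, `u₁` gains `1 - g(u₁u₂) ≥ 0`, every other vertex except `v₀` keeps its weight, and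
`v₀` receives `1 + g(u₁u₂) ∈ {0, 2}`. So weights only grow off `v₀`, which settles every condition
away from `v₀`; the two edges at `v₀` are checked by hand.
-/

open Finset

open scoped Classical

section

variable {V : Type*} [Fintype V] [DecidableEq V]

theorem vweight_eq_sum_edgeFinset (G : SimpleGraph V) (f : Sym2 V → ℤ) (v : V) :
    vweight G f v = ∑ e ∈ G.edgeFinset, if v ∈ e then f e else 0 := by
  rw [vweight, SimpleGraph.incidenceFinset_eq_filter, Finset.sum_filter]

/-- `v₀` is not removed from the vertex type: it becomes an isolated vertex of `G'`. -/
structure IsSuppression (G G' : SimpleGraph V) (v₀ u₁ u₂ : V) : Prop where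
  neighborFinset_eq : G.neighborFinset v₀ = {u₁, u₂}
  not_adj : ¬ G.Adj u₁ u₂
  adj_iff : ∀ a b, G'.Adj a b ↔ (G.Adj a b ∨ s(a, b) = s(u₁, u₂)) ∧ a ≠ v₀ ∧ b ≠ v₀

namespace IsSuppression

variable {G G' : SimpleGraph V} {v₀ u₁ u₂ : V}

theorem adj_center_iff (h : IsSuppression G G' v₀ u₁ u₂) {w : V} :
    G.Adj v₀ w ↔ w = u₁ ∨ w = u₂ := by
  rw [← SimpleGraph.mem_neighborFinset, h.neighborFinset_eq, mem_insert, mem_singleton]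

theorem adj_left (h : IsSuppression G G' v₀ u₁ u₂) : G.Adj v₀ u₁ :=
  h.adj_center_iff.2 (.inl rfl)

theorem adj_right (h : IsSuppression G G' v₀ u₁ u₂) : G.Adj v₀ u₂ :=
  h.adj_center_iff.2 (.inr rfl)

theorem merged_adj (h : IsSuppression G G' v₀ u₁ u₂) : G'.Adj u₁ u₂ :=
  (h.adj_iff u₁ u₂).2 ⟨.inr rfl, h.adj_left.ne', h.adj_right.ne'⟩

theorem center_notMem (h : IsSuppression G G' v₀ u₁ u₂) {e : Sym2 V}
    (he : e ∈ G'.edgeFinset) : v₀ ∉ e := by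
  induction e with
  | _ a b =>
    rw [SimpleGraph.mem_edgeFinset, SimpleGraph.mem_edgeSet, h.adj_iff] at he
    rw [Sym2.mem_iff, not_or]
    exact ⟨he.2.1.symm, he.2.2.symm⟩

theorem edgeFinset_eq (h : IsSuppression G G' v₀ u₁ u₂) :
    G.edgeFinset = insert s(u₁, v₀) (insert s(u₂, v₀) (G'.edgeFinset.erase s(u₁, u₂))) := by
  ext e
  induction e with
  | _ a b =>
    have hne : G.Adj a b → s(a, b) ≠ s(u₁, u₂) := fun hab hab' =>
      h.not_adj (by rwa [← SimpleGraph.mem_edgeSet, ← hab', SimpleGraph.mem_edgeSet])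
    have := h.adj_center_iff (w := a)
    have := h.adj_center_iff (w := b)
    simp only [mem_insert, mem_erase, SimpleGraph.mem_edgeFinset, SimpleGraph.mem_edgeSet,
      h.adj_iff, Sym2.eq_iff]
    grind [SimpleGraph.Adj.symm, SimpleGraph.Adj.ne]

theorem sum_edgeFinset (h : IsSuppression G G' v₀ u₁ u₂) {M : Type*} [AddCommGroup M]
    {φ ψ : Sym2 V → M} (hφψ : ∀ e ∈ G'.edgeFinset, e ≠ s(u₁, u₂) → φ e = ψ e) :
    ∑ e ∈ G.edgeFinset, φ e
      = φ s(u₁, v₀) + φ s(u₂, v₀) + (∑ e ∈ G'.edgeFinset, ψ e - ψ s(u₁, u₂)) := by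
  have hv₀ : v₀ ∈ s(u₁, v₀) ∧ v₀ ∈ s(u₂, v₀) := ⟨Sym2.mem_mk_right _ _, Sym2.mem_mk_right _ _⟩
  have h₁₂ : s(u₁, v₀) ≠ s(u₂, v₀) := by
    simp [h.merged_adj.ne, h.adj_left.ne']
  rw [h.edgeFinset_eq, sum_insert, sum_insert, add_assoc,
    ← sum_erase_eq_sub (SimpleGraph.mem_edgeFinset.2 h.merged_adj),
    sum_congr rfl fun e he => hφψ e (mem_of_mem_erase he) (ne_of_mem_erase he)]
  · exact fun he => h.center_notMem (mem_of_mem_erase he) hv₀.2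
  · rw [mem_insert, not_or]
    exact ⟨h₁₂, fun he => h.center_notMem (mem_of_mem_erase he) hv₀.1⟩

end IsSuppression

structure IsSuppressionLift (G' : SimpleGraph V) (v₀ u₁ u₂ : V) (g f : Sym2 V → ℤ) : Prop where
  eq_of_mem : ∀ e ∈ G'.edgeFinset, e ≠ s(u₁, u₂) → f e = g e
  left : f s(u₁, v₀) = 1
  right : f s(u₂, v₀) = g s(u₁, u₂)

namespace IsSuppression

variable {G G' : SimpleGraph V} {v₀ u₁ u₂ : V} {g f : Sym2 V → ℤ}

theorem sum_lift (h : IsSuppression G G' v₀ u₁ u₂) (hf : IsSuppressionLift G' v₀ u₁ u₂ g f) :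
    ∑ e ∈ G.edgeFinset, f e = ∑ e ∈ G'.edgeFinset, g e + 1 := by
  rw [h.sum_edgeFinset hf.eq_of_mem, hf.left, hf.right]
  ring

theorem vweight_lift (h : IsSuppression G G' v₀ u₁ u₂) (hf : IsSuppressionLift G' v₀ u₁ u₂ g f)
    (v : V) :
    vweight G f v = (if v ∈ s(u₁, v₀) then 1 else 0) + (if v ∈ s(u₂, v₀) then g s(u₁, u₂) else 0)
      + (vweight G' g v - if v ∈ s(u₁, u₂) then g s(u₁, u₂) else 0) := by
  rw [vweight_eq_sum_edgeFinset, vweight_eq_sum_edgeFinset,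
    h.sum_edgeFinset fun e he hne => by rw [hf.eq_of_mem e he hne], hf.left, hf.right]

theorem vweight_lift_center (h : IsSuppression G G' v₀ u₁ u₂)
    (hf : IsSuppressionLift G' v₀ u₁ u₂ g f) : vweight G f v₀ = 1 + g s(u₁, u₂) := by
  have hG' : vweight G' g v₀ = 0 := by
    rw [vweight_eq_sum_edgeFinset]
    exact sum_eq_zero fun e he => if_neg (h.center_notMem he)
  rw [h.vweight_lift hf, hG']
  simp [h.adj_left.ne, h.adj_right.ne]

theorem vweight_lift_left (h : IsSuppression G G' v₀ u₁ u₂)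
    (hf : IsSuppressionLift G' v₀ u₁ u₂ g f) :
    vweight G f u₁ = 1 + vweight G' g u₁ - g s(u₁, u₂) := by
  rw [h.vweight_lift hf]
  simp only [Sym2.mem_iff, h.adj_left.ne', h.merged_adj.ne, or_false, or_self, ↓reduceIte,
    add_zero]
  ring

theorem vweight_lift_right (h : IsSuppression G G' v₀ u₁ u₂)
    (hf : IsSuppressionLift G' v₀ u₁ u₂ g f) : vweight G f u₂ = vweight G' g u₂ := by
  rw [h.vweight_lift hf]
  simp [h.merged_adj.ne.symm, h.adj_right.ne']

theorem vweight_lift_of_ne (h : IsSuppression G G' v₀ u₁ u₂)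
    (hf : IsSuppressionLift G' v₀ u₁ u₂ g f) {v : V} (h₀ : v ≠ v₀) (h₁ : v ≠ u₁) (h₂ : v ≠ u₂) :
    vweight G f v = vweight G' g v := by
  rw [h.vweight_lift hf]
  simp [h₀, h₁, h₂]

theorem vweight_le_vweight_lift (h : IsSuppression G G' v₀ u₁ u₂)
    (hf : IsSuppressionLift G' v₀ u₁ u₂ g f) (hg : g s(u₁, u₂) ≤ 1) {v : V} (h₀ : v ≠ v₀) :
    vweight G' g v ≤ vweight G f v := by
  by_cases h₁ : v = u₁
  · rw [h₁, h.vweight_lift_left hf]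
    linarith
  by_cases h₂ : v = u₂
  · rw [h₂, h.vweight_lift_right hf]
  · rw [h.vweight_lift_of_ne hf h₀ h₁ h₂]

theorem apply_edge_eq_one_or_eq_neg_one (h : IsSuppression G G' v₀ u₁ u₂) (hg : IsSEDF0 G' g) :
    g s(u₁, u₂) = 1 ∨ g s(u₁, u₂) = -1 :=
  hg.1 _ (SimpleGraph.mem_edgeFinset.2 h.merged_adj)

theorem lift_eq_one_or_eq_neg_one (h : IsSuppression G G' v₀ u₁ u₂)
    (hf : IsSuppressionLift G' v₀ u₁ u₂ g f) (hg : IsSEDF0 G' g) :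
    ∀ e ∈ G.edgeFinset, f e = 1 ∨ f e = -1 := by
  intro e he
  rw [h.edgeFinset_eq, mem_insert, mem_insert] at he
  rcases he with rfl | rfl | he
  · exact .inl hf.left
  · exact hf.right ▸ h.apply_edge_eq_one_or_eq_neg_one hg
  · rw [hf.eq_of_mem e (mem_of_mem_erase he) (ne_of_mem_erase he)]
    exact hg.1 e (mem_of_mem_erase he)

theorem vweight_lift_nonneg (h : IsSuppression G G' v₀ u₁ u₂)
    (hf : IsSuppressionLift G' v₀ u₁ u₂ g f) (hg : IsSEDF0 G' g) (v : V) :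
    0 ≤ vweight G f v := by
  have hg₁₂ := h.apply_edge_eq_one_or_eq_neg_one hg
  by_cases h₀ : v = v₀
  · rw [h₀, h.vweight_lift_center hf]
    omega
  · exact (hg.2.1 v).trans (h.vweight_le_vweight_lift hf (by omega) h₀)

theorem two_le_vweight_lift_center (h : IsSuppression G G' v₀ u₁ u₂)
    (hf : IsSuppressionLift G' v₀ u₁ u₂ g f) (hg : IsSEDF0 G' g) {w : V} (hw : G.Adj v₀ w)
    (hfw : f s(v₀, w) = 1) : 2 ≤ vweight G f v₀ + vweight G f w := by
  rw [h.vweight_lift_center hf]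
  rcases h.adj_center_iff.1 hw with rfl | rfl
  · rw [h.vweight_lift_left hf]
    linarith [hg.2.1 w]
  · rw [Sym2.eq_swap, hf.right] at hfw
    rw [h.vweight_lift_right hf, hfw]
    linarith [hg.2.1 w]

theorem two_le_vweight_lift (h : IsSuppression G G' v₀ u₁ u₂)
    (hf : IsSuppressionLift G' v₀ u₁ u₂ g f) (hg : IsSEDF0 G' g) {x y : V} (hxy : G.Adj x y)
    (hfxy : f s(x, y) = 1) : 2 ≤ vweight G f x + vweight G f y := by
  by_cases hx : x = v₀
  · subst hx
    exact h.two_le_vweight_lift_center hf hg hxy hfxy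
  by_cases hy : y = v₀
  · subst hy
    rw [add_comm]
    exact h.two_le_vweight_lift_center hf hg hxy.symm (Sym2.eq_swap ▸ hfxy)
  have hG'xy : G'.Adj x y := (h.adj_iff x y).2 ⟨.inl hxy, hx, hy⟩
  have hne : s(x, y) ≠ s(u₁, u₂) := fun hxy' =>
    h.not_adj (by rwa [← SimpleGraph.mem_edgeSet, ← hxy', SimpleGraph.mem_edgeSet])
  have hgxy : g s(x, y) = 1 := hf.eq_of_mem _ (SimpleGraph.mem_edgeFinset.2 hG'xy) hne ▸ hfxy
  have hg₁₂ := h.apply_edge_eq_one_or_eq_neg_one hg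
  have hle : g s(u₁, u₂) ≤ 1 := by omega
  exact (hg.2.2 hG'xy hgxy).trans
    (add_le_add (h.vweight_le_vweight_lift hf hle hx) (h.vweight_le_vweight_lift hf hle hy))

theorem isSEDF0_lift (h : IsSuppression G G' v₀ u₁ u₂) (hf : IsSuppressionLift G' v₀ u₁ u₂ g f)
    (hg : IsSEDF0 G' g) : IsSEDF0 G f :=
  ⟨h.lift_eq_one_or_eq_neg_one hf hg, h.vweight_lift_nonneg hf hg,
    fun _ _ => h.two_le_vweight_lift hf hg⟩

end IsSuppression

end

theorem stmt3_general {V : Type*} [Fintype V] [DecidableEq V]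
    (G G' : SimpleGraph V) (v₀ u₁ u₂ : V)
    (hnbr : G.neighborFinset v₀ = {u₁, u₂})
    (hnadj : ¬ G.Adj u₁ u₂)
    (hG' : ∀ a b, G'.Adj a b ↔ (G.Adj a b ∨ s(a, b) = s(u₁, u₂)) ∧ a ≠ v₀ ∧ b ≠ v₀)
    (g f : Sym2 V → ℤ) (hg : IsSEDF0 G' g)
    (hf0 : ∀ e ∈ G'.edgeFinset, e ≠ s(u₁, u₂) → f e = g e)
    (hf1 : f s(u₁, v₀) = 1) (hf2 : f s(u₂, v₀) = g s(u₁, u₂)) :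
    IsSEDF0 G f ∧
      ∑ e ∈ G.edgeFinset, f e = (∑ e ∈ G'.edgeFinset, g e) + 1 := by
  have h : IsSuppression G G' v₀ u₁ u₂ := ⟨hnbr, hnadj, hG'⟩
  have hf : IsSuppressionLift G' v₀ u₁ u₂ g f := ⟨hf0, hf1, hf2⟩
  exact ⟨h.isSEDF0_lift hf hg, h.sum_lift hf⟩

/-- `v₀` has degree 2 with non-adjacent neighbours `u₁ u₂`;
extending `g ∈ SEDF⁰(G + u₁u₂ - v₀)` by `f(u₁v₀) = 1`, `f(u₂v₀) = g(u₁u₂)`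
gives `f ∈ SEDF⁰(G)` with `f(G) = g(G') + 1`. -/
theorem stmt3 {V : Type*} [Fintype V] [DecidableEq V]
    (G G' : SimpleGraph V) (v₀ u₁ u₂ : V) (hu : u₁ ≠ u₂)
    (hnbr : G.neighborFinset v₀ = {u₁, u₂})
    (hnadj : ¬ G.Adj u₁ u₂)
    (hG' : ∀ a b, G'.Adj a b ↔ (G.Adj a b ∨ s(a, b) = s(u₁, u₂)) ∧ a ≠ v₀ ∧ b ≠ v₀)
    (g f : Sym2 V → ℤ) (hg : IsSEDF0 G' g)
    (hf0 : ∀ e ∈ G'.edgeFinset, e ≠ s(u₁, u₂) → f e = g e)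
    (hf1 : f s(u₁, v₀) = 1) (hf2 : f s(u₂, v₀) = g s(u₁, u₂)) :
    IsSEDF0 G f ∧
      ∑ e ∈ G.edgeFinset, f e = (∑ e ∈ G'.edgeFinset, g e) + 1 :=
  stmt3_general G G' v₀ u₁ u₂ hnbr hnadj hG' g f hg hf0 hf1 hf2
end

section
/- For any finite simple graph G of order n with at least one vertex of even degree, the signed edge domination number satisfies γ'ₛ(G) ≤ n - 2 + v_even(G), where v_even(G) is the number of vertices of even degree. -/
/-!
Make the edges of a set `N` negative and all others positive. If every non-isolated vertex `v`
has fewer than `deg v / 2` negative edges, its weight is at least `1`, so every closed edge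
neighbourhood has sum at least `1 + 1 - 1`, and the total is `|E| - 2|N|`.

Such an `N` exists with `|E| - 2|N| ≤ ∑ᵥ φ(deg v) - 2 + [no vertex has even positive degree]`,
where `φ` is `0`, `1`, `2` on isolated, odd and even non-isolated vertices. This is at most
`n - 2 + v_even`: an isolated vertex counts `2` there and `0` here, and when the bracket is `1`
the even vertex that exists by hypothesis is isolated. The bound is proved by induction on the
edge set. Call a vertex light if its degree is `1` or even, and heavy otherwise; removing an edge
lowers `φ` at a light endpoint and raises it at a heavy one. Delete an edge between two light
vertices and keep it positive. Otherwise every edge has a heavy end `y`: delete an edge between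
two heavy vertices and make it negative when no vertex has even positive degree, or else delete
two edges at `y`, making the second one negative when it leads to a heavy vertex.
-/

open Finset

open scoped Classical

section EdgeSets

variable {V : Type*}

noncomputable def edgeDegree (A : Finset (Sym2 V)) (v : V) : ℕ := #(A.filter (v ∈ ·))

def IsLight (d : ℕ) : Prop := d = 1 ∨ Even d

def parityWeight (d : ℕ) : ℤ := if d = 0 then 0 else if Even d then 2 else 1

lemma parityWeight_pred_of_isLight {d : ℕ} (h0 : d ≠ 0) (h : IsLight d) :
    parityWeight (d - 1) = parityWeight d - 1 := by
  simp only [IsLight, parityWeight, Nat.even_iff] at *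
  split_ifs <;> omega

lemma parityWeight_pred_of_not_isLight {d : ℕ} (h : ¬IsLight d) :
    parityWeight (d - 1) = parityWeight d + 1 := by
  simp only [IsLight, parityWeight, Nat.even_iff] at *
  split_ifs <;> omega

lemma parityWeight_sub_two_of_not_isLight {d : ℕ} (h : ¬IsLight d) :
    parityWeight (d - 2) = parityWeight d := by
  simp only [IsLight, parityWeight, Nat.even_iff] at *
  split_ifs <;> omega

lemma three_le_of_not_isLight {d : ℕ} (h : ¬IsLight d) : 3 ≤ d := by
  simp only [IsLight, Nat.even_iff] at h
  omega

lemma edgeDegree_mono {N A : Finset (Sym2 V)} (h : N ⊆ A) (v : V) :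
    edgeDegree N v ≤ edgeDegree A v :=
  card_le_card (filter_subset_filter _ h)

lemma edgeDegree_sdiff {A S : Finset (Sym2 V)} (h : S ⊆ A) (v : V) :
    edgeDegree (A \ S) v = edgeDegree A v - edgeDegree S v := by
  have : (A \ S).filter (v ∈ ·) = A.filter (v ∈ ·) \ S.filter (v ∈ ·) := by grind
  rw [edgeDegree, this, card_sdiff_of_subset (filter_subset_filter _ h)]
  rfl

lemma edgeDegree_union {N K : Finset (Sym2 V)} (h : Disjoint N K) (v : V) :
    edgeDegree (N ∪ K) v = edgeDegree N v + edgeDegree K v := by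
  rw [edgeDegree, filter_union, card_union_of_disjoint (disjoint_filter_filter h)]
  rfl

lemma edgeDegree_singleton (e : Sym2 V) (v : V) :
    edgeDegree {e} v = if v ∈ e then 1 else 0 := by
  rw [edgeDegree, filter_singleton]
  split_ifs <;> rfl

lemma edgeDegree_pair {e₁ e₂ : Sym2 V} (h : e₁ ≠ e₂) (v : V) :
    edgeDegree {e₁, e₂} v = (if v ∈ e₁ then 1 else 0) + (if v ∈ e₂ then 1 else 0) := by
  rw [← edgeDegree_singleton, ← edgeDegree_singleton, ← edgeDegree_union, insert_eq]
  simpa using h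

lemma edgeDegree_pos {A : Finset (Sym2 V)} {e : Sym2 V} {v : V} (he : e ∈ A) (hv : v ∈ e) :
    0 < edgeDegree A v :=
  card_pos.2 ⟨e, mem_filter.2 ⟨he, hv⟩⟩

lemma sdiff_nonempty_of_not_isLight {A S : Finset (Sym2 V)} {y : V}
    (hy : ¬IsLight (edgeDegree A y)) (hS : #S ≤ 2) : (A \ S).Nonempty :=
  sdiff_nonempty.2 fun h => by
    have := (three_le_of_not_isLight hy).trans ((card_filter_le _ _).trans (card_le_card h))
    omega

lemma exists_adj_notMem {A : Finset (Sym2 V)} {y : V} (T : Finset V)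
    (h : #T < edgeDegree A y) : ∃ x ∉ T, s(y, x) ∈ A := by
  have : ((A.filter (y ∈ ·)) \ T.image (s(y, ·))).Nonempty := by
    rw [← card_pos]
    have := le_card_sdiff (T.image (s(y, ·))) (A.filter (y ∈ ·))
    have := card_image_le (s := T) (f := (s(y, ·)))
    rw [edgeDegree] at h
    omega
  obtain ⟨e, he⟩ := this
  simp only [mem_sdiff, mem_filter, mem_image, not_exists, not_and] at he
  obtain ⟨⟨heA, hye⟩, hT⟩ := he
  obtain ⟨x, rfl⟩ := Sym2.mem_iff_exists.1 hye
  exact ⟨x, fun hx => hT x hx rfl, heA⟩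

lemma edgeDegree_sdiff_edge {A : Finset (Sym2 V)} {a b : V} (he : s(a, b) ∈ A) (v : V) :
    edgeDegree (A \ {s(a, b)}) v = edgeDegree A v - if v ∈ s(a, b) then 1 else 0 := by
  rw [edgeDegree_sdiff (singleton_subset_iff.2 he), edgeDegree_singleton]

lemma edgeDegree_sdiff_path {A : Finset (Sym2 V)} {y a b : V} (hab : a ≠ b)
    (ha : s(y, a) ∈ A) (hb : s(y, b) ∈ A) (v : V) :
    edgeDegree (A \ {s(y, a), s(y, b)}) v =
      edgeDegree A v - (if v ∈ s(y, a) then 1 else 0) - (if v ∈ s(y, b) then 1 else 0) := by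
  have hne : s(y, a) ≠ s(y, b) := fun h => hab (Sym2.congr_right.1 h)
  rw [edgeDegree_sdiff (insert_subset ha (singleton_subset_iff.2 hb)), edgeDegree_pair hne]
  omega

def HasRoom (A S K : Finset (Sym2 V)) : Prop :=
  ∀ v, edgeDegree K v + (edgeDegree (A \ S) v - 1) / 2 ≤ (edgeDegree A v - 1) / 2

lemma hasRoom_empty (A S : Finset (Sym2 V)) : HasRoom A S ∅ := by
  intro v
  have := edgeDegree_mono (sdiff_subset (s := A) (t := S)) v
  simp only [edgeDegree, filter_empty, card_empty] at *
  omega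

lemma hasRoom_singleton_of_not_isLight {A S : Finset (Sym2 V)} {e : Sym2 V} (hS : S ⊆ A)
    (he : e ∈ S) (hS2 : ∀ v, edgeDegree S v ≤ 2) (heavy : ∀ v ∈ e, ¬IsLight (edgeDegree A v)) :
    HasRoom A S {e} := by
  intro v
  have hle := edgeDegree_mono (singleton_subset_iff.2 he) v
  have hSA := edgeDegree_mono hS v
  rw [edgeDegree_singleton] at hle ⊢
  rw [edgeDegree_sdiff hS]
  split_ifs at hle ⊢ with hv
  · have hv2 := hS2 v
    have hvh := heavy v hv
    simp only [IsLight, Nat.even_iff] at hvh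
    omega
  · omega

lemma exists_heavy_adj_or_two_light_adj {A : Finset (Sym2 V)} {y : V} (T : Finset V)
    (hT : #T ≤ 1) (hy : ¬IsLight (edgeDegree A y)) :
    (∃ x, s(y, x) ∈ A ∧ ¬IsLight (edgeDegree A x)) ∨
      ∃ a b, a ∉ T ∧ b ∉ T ∧ a ≠ b ∧ s(y, a) ∈ A ∧ s(y, b) ∈ A ∧
        IsLight (edgeDegree A a) ∧ IsLight (edgeDegree A b) := by
  by_cases hx : ∃ x, s(y, x) ∈ A ∧ ¬IsLight (edgeDegree A x)
  · exact Or.inl hx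
  push Not at hx
  have hy3 := three_le_of_not_isLight hy
  obtain ⟨a, haT, ha⟩ := exists_adj_notMem (A := A) (y := y) T (by omega)
  obtain ⟨b, hbT, hb⟩ :=
    exists_adj_notMem (A := A) (y := y) (insert a T) ((card_insert_le a T).trans_lt (by omega))
  rw [mem_insert, not_or] at hbT
  exact Or.inr ⟨a, b, haT, hbT.2, Ne.symm hbT.1, ha, hb, hx a ha, hx b hb⟩

lemma exists_not_isLight {A : Finset (Sym2 V)} (hne : A.Nonempty)
    (hlight : ∀ a b, s(a, b) ∈ A → IsLight (edgeDegree A a) → ¬IsLight (edgeDegree A b)) :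
    ∃ y, ¬IsLight (edgeDegree A y) := by
  obtain ⟨e, he⟩ := hne
  induction e using Sym2.ind with
  | h u v =>
  by_cases hu : IsLight (edgeDegree A u)
  · exact ⟨v, hlight u v he hu⟩
  · exact ⟨u, hu⟩

end EdgeSets

section ExcessBound

variable {V : Type*} [Fintype V]

def HasEvenVertex (A : Finset (Sym2 V)) : Prop := ∃ v, Even (edgeDegree A v) ∧ edgeDegree A v ≠ 0

noncomputable def excessBound (A : Finset (Sym2 V)) : ℤ :=
  ∑ v, parityWeight (edgeDegree A v) - if HasEvenVertex A then 2 else 1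

def IsMinority (A N : Finset (Sym2 V)) : Prop :=
  N ⊆ A ∧ ∀ v, edgeDegree N v ≤ (edgeDegree A v - 1) / 2

def MeetsExcessBound (A : Finset (Sym2 V)) : Prop :=
  ∃ N, IsMinority A N ∧ (#A : ℤ) - 2 * #N ≤ excessBound A

lemma sum_sub_sum_eq_of_eqOn_compl (T : Finset V) {f g : V → ℤ} (h : ∀ v ∉ T, f v = g v) :
    ∑ v, f v - ∑ v, g v = ∑ v ∈ T, (f v - g v) := by
  rw [← sum_sub_distrib]
  exact (sum_subset (subset_univ T) fun v _ hv => by simp [h v hv]).symm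

lemma MeetsExcessBound.of_sdiff {A S K : Finset (Sym2 V)} (hS : S ⊆ A) (hK : K ⊆ S)
    (room : HasRoom A S K)
    (hbound : excessBound (A \ S) + #S - 2 * #K ≤ excessBound A)
    (h : MeetsExcessBound (A \ S)) : MeetsExcessBound A := by
  obtain ⟨N, ⟨hNA, hN⟩, hNbound⟩ := h
  have hdisj : Disjoint N K :=
    disjoint_left.2 fun e heN heK => (mem_sdiff.1 (hNA heN)).2 (hK heK)
  refine ⟨N ∪ K, ⟨union_subset (hNA.trans sdiff_subset) (hK.trans hS), fun v => ?_⟩, ?_⟩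
  · rw [edgeDegree_union hdisj]
    linarith [hN v, room v]
  · have hA : #A = #(A \ S) + #S := (card_sdiff_add_card_eq_card hS).symm
    rw [card_union_of_disjoint hdisj, hA]
    push_cast
    linarith

lemma sum_parityWeight_sub_sdiff_edge {A : Finset (Sym2 V)} {a b : V} (hab : a ≠ b)
    (he : s(a, b) ∈ A) :
    ∑ v, parityWeight (edgeDegree A v) - ∑ v, parityWeight (edgeDegree (A \ {s(a, b)}) v) =
      (parityWeight (edgeDegree A a) - parityWeight (edgeDegree A a - 1)) +
        (parityWeight (edgeDegree A b) - parityWeight (edgeDegree A b - 1)) := by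
  rw [sum_sub_sum_eq_of_eqOn_compl {a, b}, sum_pair hab]
  · simp [edgeDegree_sdiff_edge he]
  · intro v hv
    simp only [mem_insert, mem_singleton, not_or] at hv
    simp [edgeDegree_sdiff_edge he, hv.1, hv.2]

lemma sum_parityWeight_sub_sdiff_path {A : Finset (Sym2 V)} {y a b : V} (hya : y ≠ a)
    (hyb : y ≠ b) (hab : a ≠ b) (ha : s(y, a) ∈ A) (hb : s(y, b) ∈ A) :
    ∑ v, parityWeight (edgeDegree A v) -
        ∑ v, parityWeight (edgeDegree (A \ {s(y, a), s(y, b)}) v) =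
      (parityWeight (edgeDegree A y) - parityWeight (edgeDegree A y - 2)) +
        (parityWeight (edgeDegree A a) - parityWeight (edgeDegree A a - 1)) +
        (parityWeight (edgeDegree A b) - parityWeight (edgeDegree A b - 1)) := by
  rw [sum_sub_sum_eq_of_eqOn_compl {y, a, b}, sum_insert (by simp [hya, hyb]), sum_pair hab,
    ← add_assoc]
  · simp [edgeDegree_sdiff_path hab ha hb, hya, hyb, hab, hya.symm, hyb.symm, hab.symm,
      Nat.sub_sub]
  · intro v hv
    simp only [mem_insert, mem_singleton, not_or] at hv
    simp [edgeDegree_sdiff_path hab ha hb, hv.1, hv.2.1, hv.2.2]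

lemma MeetsExcessBound.of_sdiff_light_edge {A : Finset (Sym2 V)} {a b : V} (hab : a ≠ b)
    (he : s(a, b) ∈ A) (ha : IsLight (edgeDegree A a)) (hb : IsLight (edgeDegree A b))
    (h : (A \ {s(a, b)}).Nonempty → MeetsExcessBound (A \ {s(a, b)})) :
    MeetsExcessBound A := by
  have hsum := sum_parityWeight_sub_sdiff_edge hab he
  rw [parityWeight_pred_of_isLight (edgeDegree_pos he (Sym2.mem_mk_left a b)).ne' ha,
    parityWeight_pred_of_isLight (edgeDegree_pos he (Sym2.mem_mk_right a b)).ne' hb] at hsum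
  rcases (A \ {s(a, b)}).eq_empty_or_nonempty with hempty | hne
  · have hA : A = {s(a, b)} := by
      rwa [sdiff_eq_empty_iff_subset, subset_singleton_iff, or_iff_right (ne_empty_of_mem he)]
        at hempty
    have hodd : ¬HasEvenVertex A := by
      rintro ⟨v, hv, hv0⟩
      rw [hA, edgeDegree_singleton] at hv hv0
      split_ifs at hv hv0 <;> simp_all
    have hzero : ∑ v, parityWeight (edgeDegree (A \ {s(a, b)}) v) = 0 := by
      simp [hempty, edgeDegree, parityWeight]
    refine ⟨∅, ⟨empty_subset A, fun v => by simp [edgeDegree]⟩, ?_⟩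
    have hcard : #A = 1 := by rw [hA, card_singleton]
    rw [excessBound, if_neg hodd, hcard, card_empty]
    push_cast
    linarith
  · refine MeetsExcessBound.of_sdiff (K := ∅) (singleton_subset_iff.2 he) (empty_subset _)
      (hasRoom_empty _ _) ?_ (h hne)
    simp only [excessBound, card_singleton, card_empty]
    split_ifs <;> push_cast <;> linarith

lemma MeetsExcessBound.of_sdiff_heavy_edge {A : Finset (Sym2 V)} {a b : V} (hab : a ≠ b)
    (he : s(a, b) ∈ A) (ha : ¬IsLight (edgeDegree A a)) (hb : ¬IsLight (edgeDegree A b))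
    (hA : ¬HasEvenVertex A) (h : MeetsExcessBound (A \ {s(a, b)})) : MeetsExcessBound A := by
  have hsum := sum_parityWeight_sub_sdiff_edge hab he
  rw [parityWeight_pred_of_not_isLight ha, parityWeight_pred_of_not_isLight hb] at hsum
  have hA' : HasEvenVertex (A \ {s(a, b)}) := by
    refine ⟨a, ?_⟩
    rw [edgeDegree_sdiff_edge he, if_pos (Sym2.mem_mk_left a b)]
    simp only [IsLight, Nat.even_iff] at ha ⊢
    omega
  refine MeetsExcessBound.of_sdiff (K := {s(a, b)}) (singleton_subset_iff.2 he) subset_rfl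
    (hasRoom_singleton_of_not_isLight (singleton_subset_iff.2 he) (mem_singleton_self _) ?_ ?_) ?_ h
  · intro v
    rw [edgeDegree_singleton]
    split_ifs <;> omega
  · intro v hv
    rcases Sym2.mem_iff.1 hv with rfl | rfl <;> assumption
  · simp only [excessBound, if_pos hA', if_neg hA, card_singleton]
    push_cast
    linarith

lemma MeetsExcessBound.of_sdiff_path_heavy {A : Finset (Sym2 V)} {y z x : V} (hyx : y ≠ x)
    (hz : s(y, z) ∈ A) (hx : s(y, x) ∈ A) (hzl : IsLight (edgeDegree A z))
    (hyh : ¬IsLight (edgeDegree A y)) (hxh : ¬IsLight (edgeDegree A x))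
    (h : MeetsExcessBound (A \ {s(y, z), s(y, x)})) : MeetsExcessBound A := by
  have hyz : y ≠ z := fun h => hyh (h ▸ hzl)
  have hzx : z ≠ x := fun h => hxh (h ▸ hzl)
  have hsum := sum_parityWeight_sub_sdiff_path hyz hyx hzx hz hx
  rw [parityWeight_sub_two_of_not_isLight hyh, parityWeight_pred_of_not_isLight hxh,
    parityWeight_pred_of_isLight (edgeDegree_pos hz (Sym2.mem_mk_right y z)).ne' hzl] at hsum
  have hA' : HasEvenVertex (A \ {s(y, z), s(y, x)}) := by
    refine ⟨x, ?_⟩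
    simp only [edgeDegree_sdiff_path hzx hz hx, Sym2.mem_iff, hyx.symm, hzx.symm, or_false,
      or_true, if_true, if_false]
    simp only [IsLight, Nat.even_iff] at hxh ⊢
    omega
  have hS : {s(y, z), s(y, x)} ⊆ A := insert_subset hz (singleton_subset_iff.2 hx)
  refine MeetsExcessBound.of_sdiff (K := {s(y, x)}) hS (by simp)
    (hasRoom_singleton_of_not_isLight hS (by simp) ?_ ?_) ?_ h
  · intro v
    rw [edgeDegree_pair fun h => hzx (Sym2.congr_right.1 h)]
    split_ifs <;> omega
  · intro v hv
    rcases Sym2.mem_iff.1 hv with rfl | rfl <;> assumption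
  · simp only [excessBound, if_pos hA', card_singleton,
      card_pair fun h => hzx (Sym2.congr_right.1 h)]
    split_ifs <;> push_cast <;> linarith

lemma MeetsExcessBound.of_sdiff_path_light {A : Finset (Sym2 V)} {y a b : V} (hab : a ≠ b)
    (ha : s(y, a) ∈ A) (hb : s(y, b) ∈ A) (hal : IsLight (edgeDegree A a))
    (hbl : IsLight (edgeDegree A b)) (hyh : ¬IsLight (edgeDegree A y))
    (hw : HasEvenVertex A → ∃ w, w ≠ a ∧ w ≠ b ∧ Even (edgeDegree A w) ∧ edgeDegree A w ≠ 0)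
    (h : MeetsExcessBound (A \ {s(y, a), s(y, b)})) : MeetsExcessBound A := by
  have hya : y ≠ a := fun h => hyh (h ▸ hal)
  have hyb : y ≠ b := fun h => hyh (h ▸ hbl)
  have hsum := sum_parityWeight_sub_sdiff_path hya hyb hab ha hb
  rw [parityWeight_sub_two_of_not_isLight hyh,
    parityWeight_pred_of_isLight (edgeDegree_pos ha (Sym2.mem_mk_right y a)).ne' hal,
    parityWeight_pred_of_isLight (edgeDegree_pos hb (Sym2.mem_mk_right y b)).ne' hbl] at hsum
  have hA' : HasEvenVertex A → HasEvenVertex (A \ {s(y, a), s(y, b)}) := by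
    intro hA
    obtain ⟨w, hwa, hwb, hw, hw0⟩ := hw hA
    have hwy : w ≠ y := by
      rintro rfl
      exact hyh (Or.inr hw)
    refine ⟨w, ?_⟩
    simpa [edgeDegree_sdiff_path hab ha hb, Sym2.mem_iff, hwa, hwb, hwy] using ⟨hw, hw0⟩
  refine MeetsExcessBound.of_sdiff (K := ∅) (insert_subset ha (singleton_subset_iff.2 hb))
    (empty_subset _) (hasRoom_empty _ _) ?_ h
  simp only [excessBound, card_empty, card_pair fun h => hab (Sym2.congr_right.1 h)]
  by_cases hA : HasEvenVertex A
  · simp only [if_pos hA, if_pos (hA' hA)]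
    push_cast
    linarith
  · simp only [if_neg hA]
    split_ifs <;> push_cast <;> linarith

lemma MeetsExcessBound.of_forall_sdiff {A : Finset (Sym2 V)} (hA : ∀ e ∈ A, ¬e.IsDiag)
    (hne : A.Nonempty)
    (ih : ∀ S ⊆ A, S.Nonempty → (A \ S).Nonempty → MeetsExcessBound (A \ S)) :
    MeetsExcessBound A := by
  have hloop {u v : V} (h : s(u, v) ∈ A) : u ≠ v := fun huv => hA _ h (Sym2.mk_isDiag_iff.2 huv)
  have ih_edge {e : Sym2 V} (he : e ∈ A) :
      (A \ {e}).Nonempty → MeetsExcessBound (A \ {e}) :=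
    ih _ (singleton_subset_iff.2 he) (singleton_nonempty _)
  have ih_path {y a b : V} (hy : ¬IsLight (edgeDegree A y)) (ha : s(y, a) ∈ A)
      (hb : s(y, b) ∈ A) : MeetsExcessBound (A \ {s(y, a), s(y, b)}) :=
    ih _ (insert_subset ha (singleton_subset_iff.2 hb)) (insert_nonempty _ _)
      (sdiff_nonempty_of_not_isLight hy card_le_two)
  by_cases hlight : ∃ a b, s(a, b) ∈ A ∧ IsLight (edgeDegree A a) ∧ IsLight (edgeDegree A b)
  · obtain ⟨a, b, he, ha, hb⟩ := hlight
    exact .of_sdiff_light_edge (hloop he) he ha hb (ih_edge he)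
  push Not at hlight
  by_cases hE : HasEvenVertex A
  · obtain ⟨z, hz, hz0⟩ := hE
    obtain ⟨y, -, hzy⟩ := exists_adj_notMem ∅ (Nat.pos_of_ne_zero hz0)
    have hyz : s(y, z) ∈ A := Sym2.eq_swap ▸ hzy
    have hy := hlight z y hzy (Or.inr hz)
    rcases exists_heavy_adj_or_two_light_adj {z} (card_singleton z).le hy with
      ⟨x, hx, hxh⟩ | ⟨a, b, ha, hb, hab, hya, hyb, hal, hbl⟩
    · exact .of_sdiff_path_heavy (hloop hx) hyz hx (Or.inr hz) hy hxh (ih_path hy hyz hx)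
    · exact .of_sdiff_path_light hab hya hyb hal hbl hy
        (fun _ => ⟨z, Ne.symm (by simpa using ha), Ne.symm (by simpa using hb), hz, hz0⟩)
        (ih_path hy hya hyb)
  · obtain ⟨y, hy⟩ := exists_not_isLight hne hlight
    rcases exists_heavy_adj_or_two_light_adj ∅ (by simp) hy with
      ⟨x, hx, hxh⟩ | ⟨a, b, -, -, hab, hya, hyb, hal, hbl⟩
    · exact .of_sdiff_heavy_edge (hloop hx) hx hy hxh hE
        (ih_edge hx (sdiff_nonempty_of_not_isLight hy ((card_singleton _).trans_le one_le_two)))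
    · exact .of_sdiff_path_light hab hya hyb hal hbl hy (fun h => absurd h hE)
        (ih_path hy hya hyb)

theorem meetsExcessBound {A : Finset (Sym2 V)} (hA : ∀ e ∈ A, ¬e.IsDiag) (hne : A.Nonempty) :
    MeetsExcessBound A := by
  induction A using Finset.strongInduction with
  | H A ih =>
  exact .of_forall_sdiff hA hne fun S hS hS0 hne' =>
    ih _ (sdiff_ssubset hS hS0) (fun e he => hA e (sdiff_subset he)) hne'

end ExcessBound

section Graph

variable {V : Type*}

noncomputable def signFunction (N : Finset (Sym2 V)) (e : Sym2 V) : ℤ := if e ∈ N then -1 else 1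

lemma sum_signFunction (N s : Finset (Sym2 V)) :
    ∑ e ∈ s, signFunction N e = #s - 2 * #(s.filter (· ∈ N)) := by
  have h : ∀ e, signFunction N e = 1 - 2 * if e ∈ N then 1 else 0 := fun e => by
    unfold signFunction
    split_ifs <;> norm_num
  simp only [h, sum_sub_distrib, ← mul_sum, sum_boole, sum_const, nsmul_eq_mul, mul_one]

lemma sum_signFunction_of_subset {N s : Finset (Sym2 V)} (hN : N ⊆ s) :
    ∑ e ∈ s, signFunction N e = #s - 2 * #N := by
  rw [sum_signFunction, filter_mem_eq_inter, inter_eq_right.2 hN]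

variable [Fintype V] [DecidableEq V] (G : SimpleGraph V)

lemma edgeDegree_edgeFinset (v : V) : edgeDegree G.edgeFinset v = G.degree v := by
  rw [← G.card_incidenceFinset_eq_degree, G.incidenceFinset_eq_filter, edgeDegree]
  congr

lemma vweight_signFunction {N : Finset (Sym2 V)} (hN : N ⊆ G.edgeFinset) (v : V) :
    vweight G (signFunction N) v = G.degree v - 2 * edgeDegree N v := by
  rw [vweight, sum_signFunction, G.card_incidenceFinset_eq_degree, G.incidenceFinset_eq_filter,
    filter_filter, edgeDegree]
  congr 4
  ext e
  simp only [mem_filter]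
  exact ⟨fun h => ⟨h.2.2, h.2.1⟩, fun h => ⟨hN h.1, h.2, h.1⟩⟩

lemma isSEDF_signFunction {N : Finset (Sym2 V)} (hN : IsMinority G.edgeFinset N) :
    IsSEDF G (signFunction N) := by
  have hpos {u v : V} (huv : G.Adj u v) : 1 ≤ vweight G (signFunction N) u := by
    have hdeg := hN.2 u
    rw [edgeDegree_edgeFinset] at hdeg
    have := G.degree_pos_iff_exists_adj u |>.2 ⟨v, huv⟩
    rw [vweight_signFunction G hN.1]
    omega
  refine ⟨fun e _ => ?_, fun u v huv => ?_⟩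
  · unfold signFunction
    split_ifs <;> simp
  · have : signFunction N s(u, v) ≤ 1 := by
      unfold signFunction
      split_ifs <;> norm_num
    linarith [hpos huv, hpos huv.symm]

lemma excessBound_edgeFinset_le (h : 0 < #(univ.filter fun v => Even (G.degree v))) :
    excessBound G.edgeFinset ≤
      (Fintype.card V : ℤ) - 2 + #(univ.filter fun v => Even (G.degree v)) := by
  have hweight : ∀ v, parityWeight (G.degree v) =
      1 + (if Even (G.degree v) then 1 else 0) - 2 * (if G.degree v = 0 then 1 else 0) := by
    intro v
    unfold parityWeight
    split_ifs <;> simp_all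
  simp only [excessBound, HasEvenVertex, edgeDegree_edgeFinset, hweight, sum_sub_distrib,
    sum_add_distrib, ← mul_sum, sum_boole, sum_const, card_univ, nsmul_eq_mul, mul_one]
  split_ifs with hE
  · linarith
  · obtain ⟨v, hv⟩ := card_pos.1 h
    have hv0 : G.degree v = 0 := by
      by_contra hv0
      exact hE ⟨v, (mem_filter.1 hv).2, hv0⟩
    have : (0 : ℤ) < #(univ.filter fun v => G.degree v = 0) := by
      exact_mod_cast card_pos.2 ⟨v, by simpa using hv0⟩
    linarith

end Graph

/-- if `G` has at least one vertex of even degree, then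
`γ'ₛ(G) ≤ n - 2 + v_even(G)`. -/
theorem stmt5 {V : Type*} [Fintype V] [DecidableEq V] (G : SimpleGraph V)
    (h : 0 < (univ.filter fun v => Even (G.degree v)).card) :
    ∃ f : Sym2 V → ℤ, IsSEDF G f ∧
      ∑ e ∈ G.edgeFinset, f e ≤
        (Fintype.card V : ℤ) - 2 + (univ.filter fun v => Even (G.degree v)).card := by
  obtain ⟨N, hN, hbound⟩ : ∃ N, IsMinority G.edgeFinset N ∧ (#G.edgeFinset : ℤ) - 2 * #N ≤
      (Fintype.card V : ℤ) - 2 + #(univ.filter fun v => Even (G.degree v)) := by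
    rcases G.edgeFinset.eq_empty_or_nonempty with hempty | hne
    · refine ⟨∅, ⟨empty_subset _, fun v => by simp [edgeDegree]⟩, ?_⟩
      have := card_le_univ (univ.filter fun v => Even (G.degree v))
      rw [hempty]
      omega
    · obtain ⟨N, hN, hb⟩ := meetsExcessBound (fun e he => G.not_isDiag_of_mem_edgeFinset he) hne
      exact ⟨N, hN, hb.trans (excessBound_edgeFinset_le G h)⟩
  refine ⟨signFunction N, isSEDF_signFunction G hN, ?_⟩
  rwa [sum_signFunction_of_subset hN.1]
end

section
/- Let m ≤ n be positive integers, both even. Then the signed edge domination number of the complete bipartite graph K_{m,n} equals min{2m, n}. -/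
open Finset

open scoped Classical

/-!
An SEDF of `K_{m,n}` is an `m × n` matrix of signs `a` with `R i + C j - a i j ≥ 1` for all
`i, j`, where `R` and `C` are its row and column sums; its weight is the sum of all entries.

Lower bound: if every row sum is at least `2`, the weight is at least `2m`. Otherwise, as `n` is
even, every row sum is even, so some row `i` has `R i ≤ 0`; summing the condition along row `i`
gives `∑ j, C j ≥ n + R i * (1 - n) ≥ n`.

Upper bound: if `2m ≤ n`, the block matrix `[[J, u], [u, J]]`, with `u` a sign vector having a
single `+1`, has all row sums `2` and nonnegative column sums, hence weight `2m`. If `n < 2m`,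
write `m = 2a`, `n = 2b`: on top of `b` rows `[C_S, C_T]` made of circulant sign blocks with
`b + 1 - a` and `a` plus signs, put `2a - b` rows `[J, -J]`. Row sums are `2` and `0`, column
sums `2` and `0`, and the weight is `2b = n`.
-/

open Matrix

namespace SimpleGraph

variable {V : Type*} [Fintype V] [DecidableEq V]

theorem incidenceFinset_eq_image_neighborFinset (G : SimpleGraph V) (v : V) :
    G.incidenceFinset v = (G.neighborFinset v).image (s(v, ·)) := by
  ext e
  simp only [mem_incidenceFinset, mem_image, mem_neighborFinset]
  constructor
  · intro he
    exact ⟨G.otherVertexOfIncident he, G.incidence_other_prop he, Sym2.other_spec' he.2⟩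
  · rintro ⟨w, hw, rfl⟩
    exact G.mem_incidence_iff_neighbor.mpr hw

theorem vweight_eq_sum_neighborFinset (G : SimpleGraph V) (f : Sym2 V → ℤ) (v : V) :
    vweight G f v = ∑ w ∈ G.neighborFinset v, f s(v, w) := by
  rw [vweight, incidenceFinset_eq_image_neighborFinset, sum_image]
  exact fun _ _ _ _ h => Sym2.congr_right.mp h

end SimpleGraph

/-- Row `i` together with column `j` is the closed neighbourhood of the edge `ij` of
`K_{α,β}`. -/
def IsSignedDominatingMatrix {α β : Type*} [Fintype α] [Fintype β] (A : Matrix α β ℤ) : Prop :=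
  (∀ i j, A i j = 1 ∨ A i j = -1) ∧ ∀ i j, 1 ≤ ∑ j', A i j' + ∑ i', A i' j - A i j

namespace IsSignedDominatingMatrix

variable {α β α' β' : Type*} [Fintype α] [Fintype β] [Fintype α'] [Fintype β']
  {A : Matrix α β ℤ}

theorem of_rowSum_eq_two (hpm : ∀ i j, A i j = 1 ∨ A i j = -1) (hrow : ∀ i, ∑ j, A i j = 2)
    (hcol : ∀ j, 0 ≤ ∑ i, A i j) : IsSignedDominatingMatrix A := by
  refine ⟨hpm, fun i j => ?_⟩
  have : A i j ≤ 1 := by rcases hpm i j with h | h <;> omega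
  linarith [hrow i, hcol j]

theorem exists_reindex (hA : IsSignedDominatingMatrix A) (e : α' ≃ α) (e' : β' ≃ β) :
    ∃ A' : Matrix α' β' ℤ, IsSignedDominatingMatrix A' ∧
      ∑ i, ∑ j, A' i j = ∑ i, ∑ j, A i j := by
  refine ⟨A.submatrix e e', ⟨fun i j => hA.1 (e i) (e' j), fun i j => ?_⟩, ?_⟩
  · have := hA.2 (e i) (e' j)
    rwa [← e.sum_comp fun i' => A i' (e' j), ← e'.sum_comp (A (e i))] at this
  · simp only [submatrix_apply, e'.sum_comp (A (e _)), e.sum_comp fun i => ∑ j, A i j]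

theorem two_dvd_rowSum_sub_card (hA : IsSignedDominatingMatrix A) (i : α) :
    2 ∣ ∑ j, A i j - Fintype.card β := by
  have : ∑ j, A i j - Fintype.card β = ∑ j, (A i j - 1) := by simp [sum_sub_distrib]
  rw [this]
  exact dvd_sum fun j _ => by rcases hA.1 i j with h | h <;> simp [h]

theorem min_le_sum (hA : IsSignedDominatingMatrix A) (hβ : Even (Fintype.card β)) :
    min (2 * (Fintype.card α : ℤ)) (Fintype.card β) ≤ ∑ i, ∑ j, A i j := by
  by_cases hrow : ∀ i, 2 ≤ ∑ j, A i j
  · calc min (2 * (Fintype.card α : ℤ)) (Fintype.card β) ≤ ∑ _i : α, 2 := by simp [mul_comm]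
      _ ≤ _ := sum_le_sum fun i _ => hrow i
  push Not at hrow
  obtain ⟨i₀, hi₀⟩ := hrow
  set R := ∑ j, A i₀ j
  have hR : R ≤ 0 := by
    obtain ⟨k, hk⟩ := hA.two_dvd_rowSum_sub_card i₀
    obtain ⟨b, hb⟩ := hβ
    omega
  have hRn : 0 ≤ R * (1 - Fintype.card β) := by
    rcases (Fintype.card β).eq_zero_or_pos with h | h
    · have : IsEmpty β := Fintype.card_eq_zero_iff.mp h
      simp [R]
    · exact mul_nonneg_of_nonpos_of_nonpos hR (by omega)
  calc min (2 * (Fintype.card α : ℤ)) (Fintype.card β) ≤ Fintype.card β := min_le_right _ _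
    _ ≤ ∑ j, (1 + A i₀ j - R) := by
      simp only [sum_sub_distrib, sum_add_distrib, sum_const, card_univ, nsmul_eq_mul]
      nlinarith
    _ ≤ ∑ j, ∑ i, A i j := sum_le_sum fun j _ => by linarith [hA.2 i₀ j]
    _ = ∑ i, ∑ j, A i j := sum_comm

end IsSignedDominatingMatrix

section CompleteBipartite

open SimpleGraph

variable {α β : Type*} [Fintype α] [Fintype β]

def sym2OfMatrix (A : Matrix α β ℤ) : Sym2 (α ⊕ β) → ℤ :=
  Sym2.lift ⟨fun u v => match u, v with
    | .inl i, .inr j | .inr j, .inl i => A i j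
    | _, _ => 0, by rintro (_ | _) (_ | _) <;> rfl⟩

theorem neighborFinset_completeBipartiteGraph_inl (i : α) :
    (completeBipartiteGraph α β).neighborFinset (.inl i) = univ.map .inr := by
  ext (j | j) <;> simp

theorem neighborFinset_completeBipartiteGraph_inr (j : β) :
    (completeBipartiteGraph α β).neighborFinset (.inr j) = univ.map .inl := by
  ext (i | i) <;> simp

theorem edgeFinset_completeBipartiteGraph :
    (completeBipartiteGraph α β).edgeFinset =
      univ.image fun x : α × β => s(.inl x.1, .inr x.2) := by
  rw [← coe_inj, coe_edgeFinset, edgeSet_completeBipartiteGraph, coe_image, coe_univ,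
    Set.image_univ]

theorem sum_edgeFinset_completeBipartiteGraph (f : Sym2 (α ⊕ β) → ℤ) :
    ∑ e ∈ (completeBipartiteGraph α β).edgeFinset, f e = ∑ i, ∑ j, f s(.inl i, .inr j) := by
  rw [edgeFinset_completeBipartiteGraph, sum_image, ← Fintype.sum_prod_type']
  rintro ⟨i, j⟩ - ⟨i', j'⟩ - h
  simpa [Sym2.eq_iff] using h

variable [DecidableEq α] [DecidableEq β]

theorem vweight_completeBipartiteGraph_inl (f : Sym2 (α ⊕ β) → ℤ) (i : α) :
    vweight (completeBipartiteGraph α β) f (.inl i) = ∑ j, f s(.inl i, .inr j) := by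
  rw [vweight_eq_sum_neighborFinset, neighborFinset_completeBipartiteGraph_inl, sum_map]
  rfl

theorem vweight_completeBipartiteGraph_inr (f : Sym2 (α ⊕ β) → ℤ) (j : β) :
    vweight (completeBipartiteGraph α β) f (.inr j) = ∑ i, f s(.inl i, .inr j) := by
  rw [vweight_eq_sum_neighborFinset, neighborFinset_completeBipartiteGraph_inr, sum_map]
  exact sum_congr rfl fun i _ => congrArg f Sym2.eq_swap

theorem isSEDF_completeBipartiteGraph_iff (f : Sym2 (α ⊕ β) → ℤ) :
    IsSEDF (completeBipartiteGraph α β) f ↔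
      IsSignedDominatingMatrix (of fun i j => f s(.inl i, .inr j)) := by
  have hdom : ∀ i j, vweight (completeBipartiteGraph α β) f (.inl i) +
      vweight (completeBipartiteGraph α β) f (.inr j) - f s(.inl i, .inr j) =
      ∑ j', f s(.inl i, .inr j') + ∑ i', f s(.inl i', .inr j) - f s(.inl i, .inr j) := by
    simp [vweight_completeBipartiteGraph_inl, vweight_completeBipartiteGraph_inr]
  constructor
  · rintro ⟨hpm, hsedf⟩
    refine ⟨fun i j => hpm _ ?_, fun i j => ?_⟩
    · simp [edgeFinset_completeBipartiteGraph]
    · simpa [hdom] using hsedf (u := .inl i) (v := .inr j) (by simp)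
  · rintro ⟨hpm, hsdm⟩
    refine ⟨?_, ?_⟩
    · simp only [edgeFinset_completeBipartiteGraph, mem_image]
      rintro _ ⟨⟨i, j⟩, -, rfl⟩
      exact hpm i j
    · rintro (i | j) (i' | j') hadj
      · simp at hadj
      · simpa [hdom] using hsdm i j'
      · rw [Sym2.eq_swap, add_comm]
        simpa [hdom] using hsdm i' j
      · simp at hadj

theorem sedfWeights_completeBipartiteGraph :
    {s : ℤ | ∃ f, IsSEDF (completeBipartiteGraph α β) f ∧
      s = ∑ e ∈ (completeBipartiteGraph α β).edgeFinset, f e} =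
      {s | ∃ A : Matrix α β ℤ, IsSignedDominatingMatrix A ∧ s = ∑ i, ∑ j, A i j} := by
  ext s
  simp only [Set.mem_ofPred_eq, isSEDF_completeBipartiteGraph_iff,
    sum_edgeFinset_completeBipartiteGraph]
  constructor
  · rintro ⟨f, hf, rfl⟩
    exact ⟨_, hf, rfl⟩
  · rintro ⟨A, hA, rfl⟩
    exact ⟨sym2OfMatrix A, hA, rfl⟩

end CompleteBipartite

section SignIndicator

variable {α : Type*} [DecidableEq α]

def signIndicator (S : Finset α) (x : α) : ℤ := if x ∈ S then 1 else -1

theorem signIndicator_eq_one_or_neg_one (S : Finset α) (x : α) :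
    signIndicator S x = 1 ∨ signIndicator S x = -1 := by
  unfold signIndicator; split_ifs <;> simp

theorem sum_signIndicator [Fintype α] (S : Finset α) :
    ∑ x, signIndicator S x = 2 * #S - Fintype.card α := by
  have : ∀ x, signIndicator S x = 2 * (if x ∈ S then 1 else 0) - 1 := fun x => by
    unfold signIndicator; split_ifs <;> norm_num
  simp [this, sum_sub_distrib, sum_ite_mem, mul_comm]

end SignIndicator

section Circulant

variable {G γ : Type*} [AddGroup G] [Fintype G] [Fintype γ]

theorem sum_circulant_row (v : G → ℤ) (i : G) : ∑ j, circulant v i j = ∑ j, v j :=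
  (Equiv.subLeft i).sum_comp v

theorem sum_circulant_col (v : G → ℤ) (j : G) : ∑ i, circulant v i j = ∑ i, v i :=
  (Equiv.subRight j).sum_comp v

variable [DecidableEq G]

def circulantBlockMatrix (S T : Finset G) : Matrix (G ⊕ γ) (G ⊕ G) ℤ :=
  fromBlocks (circulant (signIndicator S)) (circulant (signIndicator T))
    (of fun _ _ => 1) (of fun _ _ => -1)

theorem isSignedDominatingMatrix_circulantBlockMatrix {S T : Finset G}
    (hST : #S + #T = Fintype.card G + 1) (hγ : Fintype.card γ + Fintype.card G = 2 * #T) :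
    IsSignedDominatingMatrix (circulantBlockMatrix (γ := γ) S T) ∧
      ∑ i, ∑ j, circulantBlockMatrix (γ := γ) S T i j = 2 * Fintype.card G := by
  set B := circulantBlockMatrix (γ := γ) S T
  have hS := sum_signIndicator S
  have hT := sum_signIndicator T
  have hrow₁ : ∀ i, ∑ j, B (.inl i) j = 2 := fun i => by
    simp only [B, circulantBlockMatrix, Fintype.sum_sum_type, fromBlocks_apply₁₁,
      fromBlocks_apply₁₂, sum_circulant_row]
    omega
  have hrow₂ : ∀ i, ∑ j, B (.inr i) j = 0 := fun i => by
    simp [B, circulantBlockMatrix, Fintype.sum_sum_type]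
  have hcol₁ : ∀ j, ∑ i, B i (.inl j) = 2 := fun j => by
    simp only [B, circulantBlockMatrix, Fintype.sum_sum_type, fromBlocks_apply₁₁,
      fromBlocks_apply₂₁, sum_circulant_col, of_apply, sum_const, card_univ, nsmul_eq_mul, mul_one]
    omega
  have hcol₂ : ∀ j, ∑ i, B i (.inr j) = 0 := fun j => by
    simp only [B, circulantBlockMatrix, Fintype.sum_sum_type, fromBlocks_apply₁₂,
      fromBlocks_apply₂₂, sum_circulant_col, of_apply, sum_const, card_univ, nsmul_eq_mul,
      mul_neg, mul_one]
    omega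
  have hpm : ∀ i j, B i j = 1 ∨ B i j = -1 := by
    rintro (i | i) (j | j) <;> simp [B, circulantBlockMatrix, signIndicator_eq_one_or_neg_one]
  refine ⟨⟨hpm, ?_⟩, ?_⟩
  · rintro (i | i) (j | j)
    · rw [hrow₁, hcol₁]; rcases hpm (.inl i) (.inl j) with h | h <;> omega
    · rw [hrow₁, hcol₂]; rcases hpm (.inl i) (.inr j) with h | h <;> omega
    · rw [hrow₂, hcol₁]; simp [B, circulantBlockMatrix]
    · rw [hrow₂, hcol₂]; simp [B, circulantBlockMatrix]
  · rw [Fintype.sum_sum_type fun i => ∑ j, B i j]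
    simp [hrow₁, hrow₂, mul_comm]

end Circulant

section Constructions

variable {α β : Type*} [Fintype α] [Fintype β]

theorem exists_isSignedDominatingMatrix_sum_eq_two_mul_card_rows (hα : Even (Fintype.card α))
    (hβ : Even (Fintype.card β)) (hβ₀ : 0 < Fintype.card β) :
    ∃ A : Matrix α β ℤ, IsSignedDominatingMatrix A ∧ ∑ i, ∑ j, A i j = 2 * Fintype.card α := by
  obtain ⟨a, ha⟩ := hα
  obtain ⟨b, hb⟩ := hβ
  let j₀ : Fin b := ⟨0, by omega⟩
  let u : Fin b → ℤ := signIndicator {j₀}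
  let B : Matrix (Fin a ⊕ Fin a) (Fin b ⊕ Fin b) ℤ :=
    fromBlocks (of fun _ _ => 1) (of fun _ => u) (of fun _ => u) (of fun _ _ => 1)
  have hu : ∑ j, u j = 2 - b := by simp [u, sum_signIndicator]
  have hpm : ∀ i j, B i j = 1 ∨ B i j = -1 := by
    rintro (i | i) (j | j) <;> simp [B, u, signIndicator_eq_one_or_neg_one]
  have hrow : ∀ i, ∑ j, B i j = 2 := by
    rintro (i | i) <;> simp [B, Fintype.sum_sum_type, hu]
  have hcol : ∀ j, 0 ≤ ∑ i, B i j := by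
    rintro (j | j) <;> rcases signIndicator_eq_one_or_neg_one {j₀} j with h | h <;>
      simp [B, u, Fintype.sum_sum_type, h]
  obtain ⟨A, hA, hsum⟩ := (IsSignedDominatingMatrix.of_rowSum_eq_two hpm hrow hcol).exists_reindex
    ((Fintype.equivFinOfCardEq ha).trans finSumFinEquiv.symm)
    ((Fintype.equivFinOfCardEq hb).trans finSumFinEquiv.symm)
  refine ⟨A, hA, ?_⟩
  simp [hsum, hrow, ha, mul_comm]

theorem exists_isSignedDominatingMatrix_sum_eq_card_cols (hα : Even (Fintype.card α))
    (hβ : Even (Fintype.card β)) (hα₀ : 0 < Fintype.card α)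
    (hαβ : Fintype.card α ≤ Fintype.card β) (hβα : Fintype.card β ≤ 2 * Fintype.card α) :
    ∃ A : Matrix α β ℤ, IsSignedDominatingMatrix A ∧ ∑ i, ∑ j, A i j = Fintype.card β := by
  obtain ⟨a, ha⟩ := hα
  obtain ⟨b, hb⟩ := hβ
  have : NeZero b := ⟨by omega⟩
  obtain ⟨S, -, hS⟩ := exists_subset_card_eq (s := (univ : Finset (Fin b))) (n := b + 1 - a)
    (by rw [card_univ, Fintype.card_fin]; omega)
  obtain ⟨T, -, hT⟩ := exists_subset_card_eq (s := (univ : Finset (Fin b))) (n := a)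
    (by rw [card_univ, Fintype.card_fin]; omega)
  obtain ⟨hB, hBsum⟩ := isSignedDominatingMatrix_circulantBlockMatrix (γ := Fin (a + a - b))
    (S := S) (T := T) (by rw [hS, hT, Fintype.card_fin]; omega)
    (by rw [hT, Fintype.card_fin, Fintype.card_fin]; omega)
  obtain ⟨A, hA, hsum⟩ := hB.exists_reindex
    ((Fintype.equivFinOfCardEq (by omega : Fintype.card α = b + (a + a - b))).trans
      finSumFinEquiv.symm)
    ((Fintype.equivFinOfCardEq hb).trans finSumFinEquiv.symm)
  refine ⟨A, hA, ?_⟩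
  rw [hsum, hBsum, hb, Fintype.card_fin]
  push_cast
  ring

end Constructions

/-- for even positive integers `m ≤ n`,
`γ'ₛ(K_{m,n}) = min {2m, n}`. -/
theorem stmt10 (m n : ℕ) (hm0 : 0 < m) (hmn : m ≤ n) (hm : Even m) (hn : Even n) :
    IsLeast
      {s : ℤ | ∃ f : Sym2 (Fin m ⊕ Fin n) → ℤ,
        IsSEDF (completeBipartiteGraph (Fin m) (Fin n)) f ∧
          s = ∑ e ∈ (completeBipartiteGraph (Fin m) (Fin n)).edgeFinset, f e}
      (min (2 * (m : ℤ)) (n : ℤ)) := by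
  rw [sedfWeights_completeBipartiteGraph]
  have hm' : Even (Fintype.card (Fin m)) := by simpa using hm
  have hn' : Even (Fintype.card (Fin n)) := by simpa using hn
  refine ⟨?_, ?_⟩
  · rcases le_or_gt (2 * m) n with h | h
    · obtain ⟨A, hA, hsum⟩ :=
        exists_isSignedDominatingMatrix_sum_eq_two_mul_card_rows hm' hn'
          (by rw [Fintype.card_fin]; omega)
      exact ⟨A, hA, by rw [hsum, min_eq_left (by exact_mod_cast h)]; simp⟩
    · obtain ⟨A, hA, hsum⟩ := exists_isSignedDominatingMatrix_sum_eq_card_cols hm' hn'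
        (by simpa using hm0) (by simpa using hmn) (by simp only [Fintype.card_fin]; omega)
      exact ⟨A, hA, by rw [hsum, min_eq_right (by exact_mod_cast h.le)]; simp⟩
  · rintro s ⟨A, hA, rfl⟩
    simpa using hA.min_le_sum hn'
end

section
/- Let G be a finite simple graph with n vertices, m edges, and minimum degree at least 1. Then γ'ₛ(G) ≥ n - m. -/
open Finset

open scoped Classical

/-! Let `p v` be the number of positive edges at `v`. Since `∑ f = 2P - m` and `∑ p = 2P`, where
`P` is the number of positive edges, it suffices to show `n ≤ ∑ p`. If `p u = 0` then every
edge `uv` is negative and its domination condition gives `deg v < 2 p v`. Hence the vertices with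
`p = 0` are independent, and a vertex `v` with `p v > 0` has at most `deg v - p v < p v` of them
as neighbours. As every vertex has a neighbour, charging each vertex with `p = 0` to one of its
neighbours gives `n ≤ ∑ p`. -/

lemma Finset.sum_eq_two_mul_card_filter_eq_one_sub_card {α R : Type*} [Ring R] [DecidableEq R]
    (s : Finset α) (f : α → R) (hf : ∀ a ∈ s, f a = 1 ∨ f a = -1) :
    ∑ a ∈ s, f a = 2 * #{a ∈ s | f a = 1} - #s := by
  have hpm : ∀ a ∈ s, f a = 2 * (if f a = 1 then 1 else 0) - 1 := by
    intro a ha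
    split_ifs with h
    · rw [h]; norm_num
    · rw [(hf a ha).resolve_left h]; norm_num
  rw [sum_congr rfl hpm, sum_sub_distrib, ← mul_sum, sum_boole, sum_const, nsmul_one]

namespace SimpleGraph

section

variable {V : Type*} [Fintype V] {G H : SimpleGraph V} [DecidableRel G.Adj] [DecidableRel H.Adj]

lemma card_neighborFinset_filter_degree_eq_zero_add_degree_le (hHG : H ≤ G) (v : V) :
    #{u ∈ G.neighborFinset v | H.degree u = 0} + H.degree v ≤ G.degree v := by
  have hdisj : Disjoint {u ∈ G.neighborFinset v | H.degree u = 0} (H.neighborFinset v) := by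
    refine Finset.disjoint_left.2 fun u hu huH => ?_
    have hadj : H.Adj u v := ((H.mem_neighborFinset v u).1 huH).symm
    exact ((H.degree_pos_iff_exists_adj u).2 ⟨v, hadj⟩).ne' (mem_filter.1 hu).2
  rw [← card_neighborFinset_eq_degree, ← card_union_of_disjoint hdisj,
    ← card_neighborFinset_eq_degree]
  refine card_le_card (union_subset (filter_subset _ _) fun u hu => ?_)
  simpa using hHG ((H.mem_neighborFinset v u).1 hu)

theorem card_le_sum_degree_of_le (hHG : H ≤ G) (hδ : ∀ v, 1 ≤ G.degree v)
    (hzero : ∀ ⦃u v⦄, G.Adj u v → H.degree u = 0 → G.degree v < 2 * H.degree v) :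
    Fintype.card V ≤ ∑ v, H.degree v := by
  set Z : Finset V := {v | H.degree v = 0}
  have hZ : ∀ v, v ∈ Z ↔ H.degree v = 0 := by simp [Z]
  have hnbr : ∀ v ∉ Z, #{u ∈ G.neighborFinset v | H.degree u = 0} + 1 ≤ H.degree v := by
    intro v hv
    have := card_neighborFinset_filter_degree_eq_zero_add_degree_le hHG v
    rcases eq_empty_or_nonempty {u ∈ G.neighborFinset v | H.degree u = 0} with h | ⟨u, hu⟩
    · rw [h, card_empty]
      have := (hZ v).not.1 hv
      omega
    · have := hzero ((G.mem_neighborFinset v u).1 (mem_filter.1 hu).1).symm (mem_filter.1 hu).2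
      omega
  have hcover : Z ⊆ Zᶜ.biUnion fun v => {u ∈ G.neighborFinset v | H.degree u = 0} := by
    intro u hu
    rw [hZ] at hu
    obtain ⟨v, huv⟩ := (G.degree_pos_iff_exists_adj u).1 (hδ u)
    have hv : v ∉ Z := by
      have := hzero huv hu
      rw [hZ]
      omega
    exact mem_biUnion.2 ⟨v, mem_compl.2 hv, by simpa [hu] using huv.symm⟩
  calc Fintype.card V = #Zᶜ + #Z := (card_compl_add_card Z).symm
    _ ≤ #Zᶜ + ∑ v ∈ Zᶜ, #{u ∈ G.neighborFinset v | H.degree u = 0} :=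
        Nat.add_le_add_left ((card_le_card hcover).trans card_biUnion_le) _
    _ = ∑ v ∈ Zᶜ, (#{u ∈ G.neighborFinset v | H.degree u = 0} + 1) := by
        rw [sum_add_distrib, card_eq_sum_ones, add_comm]
    _ ≤ ∑ v ∈ Zᶜ, H.degree v := sum_le_sum fun v hv => hnbr v (mem_compl.1 hv)
    _ ≤ ∑ v, H.degree v := sum_le_sum_of_subset (subset_univ _)

end

variable {V : Type*}

def positiveSubgraph (G : SimpleGraph V) (f : Sym2 V → ℤ) : SimpleGraph V :=
  G.deleteEdges {e | f e ≠ 1}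

variable [Fintype V] {G : SimpleGraph V} {f : Sym2 V → ℤ}

lemma edgeFinset_positiveSubgraph :
    (G.positiveSubgraph f).edgeFinset = {e ∈ G.edgeFinset | f e = 1} := by
  ext e
  rw [mem_filter, mem_edgeFinset, mem_edgeFinset]
  simp [positiveSubgraph]

variable [DecidableEq V]

lemma incidenceFinset_positiveSubgraph (v : V) :
    (G.positiveSubgraph f).incidenceFinset v = {e ∈ G.incidenceFinset v | f e = 1} := by
  ext e
  rw [mem_filter, mem_incidenceFinset, mem_incidenceFinset]
  simp [positiveSubgraph, incidenceSet, and_right_comm]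

lemma vweight_eq_two_mul_degree_positiveSubgraph_sub_degree
    (hf : ∀ e ∈ G.edgeFinset, f e = 1 ∨ f e = -1) (v : V) :
    vweight G f v = 2 * (G.positiveSubgraph f).degree v - G.degree v := by
  rw [vweight, sum_eq_two_mul_card_filter_eq_one_sub_card _ _
      fun e he => hf e (G.incidenceFinset_subset v he),
    ← incidenceFinset_positiveSubgraph, card_incidenceFinset_eq_degree,
    card_incidenceFinset_eq_degree]

lemma _root_.IsSEDF.degree_lt_two_mul_degree_positiveSubgraph (hf : IsSEDF G f) ⦃u v : V⦄
    (huv : G.Adj u v) (hu : (G.positiveSubgraph f).degree u = 0) :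
    G.degree v < 2 * (G.positiveSubgraph f).degree v := by
  have hneg : f s(u, v) = -1 := by
    refine (hf.1 _ (G.mem_edgeFinset.2 huv)).resolve_left fun hpos => ?_
    have : 0 < (G.positiveSubgraph f).degree u :=
      (degree_pos_iff_exists_adj _ u).2 ⟨v, by simp [positiveSubgraph, huv, hpos]⟩
    omega
  have hdom := hf.2 huv
  have hdu := (G.degree_pos_iff_exists_adj u).2 ⟨v, huv⟩
  rw [vweight_eq_two_mul_degree_positiveSubgraph_sub_degree hf.1,
    vweight_eq_two_mul_degree_positiveSubgraph_sub_degree hf.1, hneg, hu] at hdom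
  omega

end SimpleGraph

/-- for a graph with `n` vertices, `m` edges and minimum degree at
least 1, `γ'ₛ(G) ≥ n - m`. -/
theorem stmt13 {V : Type*} [Fintype V] [DecidableEq V] (G : SimpleGraph V)
    (hδ : ∀ v, 1 ≤ G.degree v) :
    ∀ f : Sym2 V → ℤ, IsSEDF G f →
      (Fintype.card V : ℤ) - G.edgeFinset.card ≤ ∑ e ∈ G.edgeFinset, f e := by
  intro f hf
  have hcard : Fintype.card V ≤ 2 * #(G.positiveSubgraph f).edgeFinset := by
    rw [← SimpleGraph.sum_degrees_eq_twice_card_edges]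
    exact SimpleGraph.card_le_sum_degree_of_le (G.deleteEdges_le _) hδ
      hf.degree_lt_two_mul_degree_positiveSubgraph
  rw [sum_eq_two_mul_card_filter_eq_one_sub_card _ _ hf.1,
    ← SimpleGraph.edgeFinset_positiveSubgraph]
  omega
end
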